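/- arXiv:2304.14584 — 2 statements merged into one kernel-verified Lean document; each statement's English description precedes it below -/
import Mathlib

section
/- Let v₀, v_x, v_y, h₀ : [0, π/(2f)) → ℝ be defined by v₀(t) = 0, v_x(t) = τ tan(ft), v_y(t) = -f tan(ft), h₀(t) = c e^{τt} sec(ft). Then these functions satisfy the reduced ODE system: v₀' = -v₀ v_y - τ v₀, v_x' = f τ - v_x v_y, v_y' = -f v_x - v_y² - f² - τ v_y, h₀' = -h₀ v_y + τ h₀, with initial conditions v₀(0) = v_x(0) = v_y(0) = 0, h₀(0) = c. -/
/-!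
On `[0, π/(2f))` the function `tan (f t)` is smooth and solves the Riccati equation
`T' = f (1 + T²)`, and `c e^{τt} / cos (f t)` has logarithmic derivative `τ + f tan (f t)`.
Substituting these two derivatives, every equation of the system becomes a polynomial identity
in `tan (f t)`.
-/

open Real

lemma Real.cos_mul_pos_of_mem_Ico {f t : ℝ} (ht : t ∈ Set.Ico 0 (π / (2 * f))) :
    0 < cos (f * t) := by
  obtain ⟨ht0, htf⟩ := ht
  -- the interval is empty unless `0 < f` (for `f = 0`, `π / 0 = 0`)
  have hf : 0 < f := by
    have : 0 < π / (2 * f) := ht0.trans_lt htf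
    have : 0 < 2 * f := (div_pos_iff_of_pos_left pi_pos).mp this
    linarith
  apply cos_pos_of_mem_Ioo
  constructor
  · nlinarith [pi_pos]
  · calc f * t < f * (π / (2 * f)) := mul_lt_mul_of_pos_left htf hf
      _ = π / 2 := by field_simp

lemma Real.hasDerivAt_tan_mul {f t : ℝ} (h : cos (f * t) ≠ 0) :
    HasDerivAt (fun s => tan (f * s)) (f * (1 + tan (f * t) ^ 2)) t := by
  have := (hasDerivAt_tan h).comp t ((hasDerivAt_id t).const_mul f)
  refine this.congr_deriv ?_
  rw [one_div, ← inv_one_add_tan_sq h, inv_inv]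
  simp [mul_comm]

lemma Real.hasDerivAt_mul_exp_mul_div_cos_mul (c τ : ℝ) {f t : ℝ} (h : cos (f * t) ≠ 0) :
    HasDerivAt (fun s => c * exp (τ * s) / cos (f * s))
      (c * exp (τ * t) / cos (f * t) * (τ + f * tan (f * t))) t := by
  have hexp : HasDerivAt (fun s => c * exp (τ * s)) (c * (exp (τ * t) * (τ * 1))) t :=
    ((hasDerivAt_exp (τ * t)).comp t ((hasDerivAt_id t).const_mul τ)).const_mul c
  have hcos : HasDerivAt (fun s => cos (f * s)) (-sin (f * t) * (f * 1)) t :=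
    (hasDerivAt_cos (f * t)).comp t ((hasDerivAt_id t).const_mul f)
  refine (hexp.div hcos h).congr_deriv ?_
  rw [tan_eq_sin_div_cos]
  generalize f * t = x at h ⊢
  field_simp
  ring

theorem stmt_8_general (f τ c : ℝ) :
    let v0 : ℝ → ℝ := fun _ => 0
    let vx : ℝ → ℝ := fun t => τ * Real.tan (f * t)
    let vy : ℝ → ℝ := fun t => -f * Real.tan (f * t)
    let h0 : ℝ → ℝ := fun t => c * Real.exp (τ * t) / Real.cos (f * t)
    (∀ t ∈ Set.Ico (0 : ℝ) (Real.pi / (2 * f)),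
        HasDerivAt v0 (-v0 t * vy t - τ * v0 t) t ∧
        HasDerivAt vx (f * τ - vx t * vy t) t ∧
        HasDerivAt vy (-f * vx t - (vy t) ^ 2 - f ^ 2 - τ * vy t) t ∧
        HasDerivAt h0 (-h0 t * vy t + τ * h0 t) t) ∧
      v0 0 = 0 ∧ vx 0 = 0 ∧ vy 0 = 0 ∧ h0 0 = c := by
  intro v0 vx vy h0
  refine ⟨fun t ht => ?_, rfl, by simp [vx], by simp [vy], by simp [h0]⟩
  have hcos := (cos_mul_pos_of_mem_Ico ht).ne'
  have htan := hasDerivAt_tan_mul hcos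
  refine ⟨(hasDerivAt_const t 0).congr_deriv (by simp [v0]), ?_, ?_, ?_⟩
  · exact (htan.const_mul τ).congr_deriv (by ring)
  · exact (htan.const_mul (-f)).congr_deriv (by ring)
  · exact (hasDerivAt_mul_exp_mul_div_cos_mul c τ hcos).congr_deriv (by ring)

theorem stmt_8 (f τ c : ℝ) (hf : 0 < f) :
    let v0 : ℝ → ℝ := fun _ => 0
    let vx : ℝ → ℝ := fun t => τ * Real.tan (f * t)
    let vy : ℝ → ℝ := fun t => -f * Real.tan (f * t)
    let h0 : ℝ → ℝ := fun t => c * Real.exp (τ * t) / Real.cos (f * t)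
    (∀ t ∈ Set.Ico (0 : ℝ) (Real.pi / (2 * f)),
        HasDerivAt v0 (-v0 t * vy t - τ * v0 t) t ∧
        HasDerivAt vx (f * τ - vx t * vy t) t ∧
        HasDerivAt vy (-f * vx t - (vy t) ^ 2 - f ^ 2 - τ * vy t) t ∧
        HasDerivAt h0 (-h0 t * vy t + τ * h0 t) t) ∧
      v0 0 = 0 ∧ vx 0 = 0 ∧ vy 0 = 0 ∧ h0 0 = c :=
  stmt_8_general f τ c
end

section
/- For the linear system ψ' = Aψ + H in ℝ³ with A having rows (-τ, f, 0), (-f, -τ, 0), (-h_x, -h_y, 0) and H = -(1/F²)(h_x, h_y, 0), with τ > 0, the third component ψ₃(t) satisfies lim_{t→∞} ψ₃'(t) = τ(h_x² + h_y²)/(F²(f² + τ²)). -/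
/-!
Away from the equilibrium `(u₀, v₀)` of the velocity equations, the deviation `(a, b)` of
`(ψ₁, ψ₂)` obeys a damped rotation `a' = -τ a + f b`, `b' = -f a - τ b`, so
`(a² + b²)' = -2τ (a² + b²)` and the deviation decays like `exp (-τ t)`. Hence
`ψ₃' = -h_x ψ₁ - h_y ψ₂` converges to `-h_x u₀ - h_y v₀`.
-/

open Matrix Filter Topology Real

theorem eq_mul_exp_of_hasDerivAt_mul {r : ℝ → ℝ} {c : ℝ}
    (hr : ∀ t, HasDerivAt r (c * r t) t) (t : ℝ) : r t = r 0 * exp (c * t) := by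
  have hg (s : ℝ) : HasDerivAt (fun s => r s * exp (-c * s)) 0 s :=
    ((hr s).fun_mul ((hasDerivAt_id' s).const_mul (-c)).exp).congr_deriv (by ring)
  have hconst := is_const_of_deriv_eq_zero (fun s => (hg s).differentiableAt)
    (fun s => (hg s).deriv) t 0
  simp only [mul_zero, exp_zero, mul_one] at hconst
  rw [← hconst, mul_assoc, ← exp_add, neg_mul, neg_add_cancel, exp_zero, mul_one]

theorem tendsto_zero_of_hasDerivAt_mul {r : ℝ → ℝ} {c : ℝ} (hc : c < 0)
    (hr : ∀ t, HasDerivAt r (c * r t) t) : Tendsto r atTop (𝓝 0) := by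
  have hexp : Tendsto (fun t => exp (c * t)) atTop (𝓝 0) :=
    tendsto_exp_atBot.comp (tendsto_id.const_mul_atTop_of_neg hc)
  simpa only [← eq_mul_exp_of_hasDerivAt_mul hr, mul_zero] using hexp.const_mul (r 0)

theorem tendsto_zero_of_sq_le {α : Type*} {l : Filter α} {a r : α → ℝ}
    (har : ∀ t, a t ^ 2 ≤ r t) (hr : Tendsto r l (𝓝 0)) : Tendsto a l (𝓝 0) := by
  refine squeeze_zero_norm (fun t => abs_le_sqrt (har t)) ?_
  simpa only [sqrt_zero] using hr.sqrt

theorem tendsto_zero_of_hasDerivAt_dampedRotation {τ f : ℝ} (hτ : 0 < τ) {a b : ℝ → ℝ}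
    (ha : ∀ t, HasDerivAt a (-τ * a t + f * b t) t)
    (hb : ∀ t, HasDerivAt b (-f * a t - τ * b t) t) :
    Tendsto a atTop (𝓝 0) ∧ Tendsto b atTop (𝓝 0) := by
  have hr : ∀ t, HasDerivAt (fun s => a s ^ 2 + b s ^ 2) (-(2 * τ) * (a t ^ 2 + b t ^ 2)) t :=
    fun t => (((ha t).fun_pow 2).add ((hb t).fun_pow 2)).congr_deriv (by push_cast; ring)
  have hr0 := tendsto_zero_of_hasDerivAt_mul (by linarith) hr
  exact ⟨tendsto_zero_of_sq_le (fun t => le_add_of_nonneg_right (sq_nonneg (b t))) hr0,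
    tendsto_zero_of_sq_le (fun t => le_add_of_nonneg_left (sq_nonneg (a t))) hr0⟩

theorem tendsto_of_hasDerivAt_dampedRotation_add_const {τ f p q : ℝ} (hτ : 0 < τ)
    {u v : ℝ → ℝ} (hu : ∀ t, HasDerivAt u (-τ * u t + f * v t + p) t)
    (hv : ∀ t, HasDerivAt v (-f * u t - τ * v t + q) t) :
    Tendsto u atTop (𝓝 ((τ * p + f * q) / (f ^ 2 + τ ^ 2))) ∧
      Tendsto v atTop (𝓝 ((τ * q - f * p) / (f ^ 2 + τ ^ 2))) := by
  set u₀ := (τ * p + f * q) / (f ^ 2 + τ ^ 2)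
  set v₀ := (τ * q - f * p) / (f ^ 2 + τ ^ 2)
  have hD : f ^ 2 + τ ^ 2 ≠ 0 := by positivity
  have ha (t : ℝ) : HasDerivAt (fun s => u s - u₀) (-τ * (u t - u₀) + f * (v t - v₀)) t :=
    ((hu t).sub_const u₀).congr_deriv (by simp only [u₀, v₀]; field_simp; ring)
  have hb (t : ℝ) : HasDerivAt (fun s => v s - v₀) (-f * (u t - u₀) - τ * (v t - v₀)) t :=
    ((hv t).sub_const v₀).congr_deriv (by simp only [u₀, v₀]; field_simp; ring)
  have hdecay := tendsto_zero_of_hasDerivAt_dampedRotation hτ ha hb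
  exact ⟨by simpa using hdecay.1.add_const u₀, by simpa using hdecay.2.add_const v₀⟩

theorem stmt_19_general (τ f F hx hy : ℝ) (hτ : 0 < τ) :
    let A : Matrix (Fin 3) (Fin 3) ℝ := !![-τ, f, 0; -f, -τ, 0; -hx, -hy, 0]
    let H : Fin 3 → ℝ := ![-(1 / F ^ 2) * hx, -(1 / F ^ 2) * hy, 0]
    ∀ ψ : ℝ → Fin 3 → ℝ,
      (∀ t : ℝ, HasDerivAt ψ (A.mulVec (ψ t) + H) t) →
        Filter.Tendsto (fun t => deriv (fun s => ψ s 2) t) Filter.atTop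
          (nhds (τ * (hx ^ 2 + hy ^ 2) / (F ^ 2 * (f ^ 2 + τ ^ 2)))) := by
  intro A H ψ hψ
  have hcomp (t : ℝ) (i : Fin 3) : HasDerivAt (fun s => ψ s i) ((A *ᵥ ψ t + H) i) t :=
    hasDerivAt_pi.1 (hψ t) i
  have hu (t : ℝ) : HasDerivAt (fun s => ψ s 0)
      (-τ * ψ t 0 + f * ψ t 1 + -(1 / F ^ 2) * hx) t := by
    convert hcomp t 0 using 1
    simp [A, H, dotProduct, Fin.sum_univ_three]
  have hv (t : ℝ) : HasDerivAt (fun s => ψ s 1)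
      (-f * ψ t 0 - τ * ψ t 1 + -(1 / F ^ 2) * hy) t := by
    convert hcomp t 1 using 1
    simp [A, H, dotProduct, Fin.sum_univ_three, sub_eq_add_neg]
  have hw (t : ℝ) : deriv (fun s => ψ s 2) t = -hx * ψ t 0 - hy * ψ t 1 := by
    rw [(hcomp t 2).deriv]
    simp [A, H, dotProduct, Fin.sum_univ_three, sub_eq_add_neg]
  obtain ⟨hu₀, hv₀⟩ := tendsto_of_hasDerivAt_dampedRotation_add_const hτ hu hv
  convert ((hu₀.const_mul (-hx)).sub (hv₀.const_mul hy)).congr (fun t => (hw t).symm) using 2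
  rw [← div_div]
  ring

theorem stmt_19 (τ f F hx hy : ℝ) (hτ : 0 < τ) (hF : F ≠ 0) :
    let A : Matrix (Fin 3) (Fin 3) ℝ := !![-τ, f, 0; -f, -τ, 0; -hx, -hy, 0]
    let H : Fin 3 → ℝ := ![-(1 / F ^ 2) * hx, -(1 / F ^ 2) * hy, 0]
    ∀ ψ : ℝ → Fin 3 → ℝ,
      (∀ t : ℝ, HasDerivAt ψ (A.mulVec (ψ t) + H) t) →
        Filter.Tendsto (fun t => deriv (fun s => ψ s 2) t) Filter.atTop
          (nhds (τ * (hx ^ 2 + hy ^ 2) / (F ^ 2 * (f ^ 2 + τ ^ 2)))) :=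
  stmt_19_general τ f F hx hy hτ
end
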